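/- With initial points x̄^{n+1} = (1, 2, ..., n+1) and x̄^n = (1, 2, ..., n), the h-transformed kernel started from (x̄^{n+1}, x̄^n) factorizes: q_t^{n,+}((x̄^{n+1}, x̄^n), (x, y)) = p_t^{n+1,+}(x̄^{n+1}, x) · λ^n(x, y) for all (x, y) ∈ W^{n+1,n} and t ∈ ℕ, where λ^n(x,y) = n! h_n(y)/h_{n+1}(x) and p_t^{n+1,+}(x̄,x) = (h_{n+1}(x)/h_{n+1}(x̄)) det[φ^{(t)}(x_j − x̄_i)]. -/

import Mathlib

open Matrix BigOperators

/-- Kronecker delta `δ_i : ℤ → ℝ`. -/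
noncomputable def deltaK (i : ℤ) : ℤ → ℝ := fun x => if x = i then 1 else 0

/-- Convolution `(f * g)(x) = Σ_{s+t=x} f(s) g(t)`. -/
noncomputable def conv (f g : ℤ → ℝ) : ℤ → ℝ := fun x => ∑' s : ℤ, f s * g (x - s)

/-- The Bernoulli(1/2) step distribution `φ = (δ_0 + δ_1)/2`. -/
noncomputable def phiB : ℤ → ℝ := fun x => (deltaK 0 x + deltaK 1 x) / 2

/-- `t`-fold convolution power of `φ`. -/
noncomputable def phiPow : ℕ → ℤ → ℝ
  | 0 => deltaK 0
  | (n+1) => conv (phiPow n) phiB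

/-- `Δ⁻¹ f (x) = Σ_{z ≤ x} f(z)`. -/
noncomputable def Dinv (f : ℤ → ℝ) (x : ℤ) : ℝ := ∑' z : {z : ℤ // z ≤ x}, f z.1

/-- Backward difference `Δ f (x) = f(x) - f(x-1)`. -/
noncomputable def Dd (f : ℤ → ℝ) (x : ℤ) : ℝ := f x - f (x - 1)

/-- Vandermonde product `h_n(z) = Π_{i<j} (z_j - z_i)` (real valued). -/
noncomputable def vand (n : ℕ) (z : Fin n → ℤ) : ℝ :=
  ∏ i : Fin n, ∏ j ∈ Finset.Ioi i, ((z j - z i : ℤ) : ℝ)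

/-- The interlacing cone `W^{n+1,n}`: `x_1 ≤ y_1 < x_2 ≤ … ≤ y_n < x_{n+1}`. -/
def interlace (n : ℕ) (x : Fin (n+1) → ℤ) (y : Fin n → ℤ) : Prop :=
  ∀ i : Fin n, x i.castSucc ≤ y i ∧ y i < x i.succ

/-- The determinantal kernel `q_t^n((x,y),(x',y'))` (rows indexed by the starting
point `(x,y)`, columns by the end point `(x',y')`). -/
noncomputable def qker (n t : ℕ) (x : Fin (n+1) → ℤ) (y : Fin n → ℤ)
    (x' : Fin (n+1) → ℤ) (y' : Fin n → ℤ) : ℝ :=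
  (Matrix.fromBlocks
    (Matrix.of fun i j : Fin (n+1) => phiPow t (x' j - x i))
    (Matrix.of fun (i : Fin (n+1)) (j : Fin n) =>
      Dinv (phiPow t) (y' j - x i) - if (i : ℕ) ≤ (j : ℕ) then 1 else 0)
    (Matrix.of fun (i : Fin n) (j : Fin (n+1)) => Dd (phiPow t) (x' j - y i))
    (Matrix.of fun i j : Fin n => phiPow t (y' j - y i))).det

/-- `λ^n(x,y) = n! h_n(y)/h_{n+1}(x)`. -/
noncomputable def lam (n : ℕ) (x : Fin (n+1) → ℤ) (y : Fin n → ℤ) : ℝ :=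
  (n.factorial : ℝ) * vand n y / vand (n+1) x

/-- `p_t^{n,+}(y,y') = (h_n(y')/h_n(y)) det[φ^{(t)}(y'_j - y_i)]`. -/
noncomputable def pplus (n t : ℕ) (y y' : Fin n → ℤ) : ℝ :=
  (vand n y' / vand n y) * (Matrix.of fun i j : Fin n => phiPow t (y' j - y i)).det

/-!
Subtracting consecutive rows of the `x`-block of `q_t` from the rows of the `y`-block turns the
lower blocks into `0` and the identity: since `x̄^n` is `x̄^{n+1}` with its last point dropped,
the `Δφ` rows are exactly these differences, and `ΔΔ⁻¹φ = φ` together with the shift of the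
indicator `1{j ≥ i}` produces the identity. Hence `q_t` from the packed configuration is
`det[φ^{(t)}(x_j - x̄_i)]`, and the prefactors agree because `h_{n+1}(x̄^{n+1}) = n! h_n(x̄^n)`
(a ratio of superfactorials). When `x` has a repeated coordinate both sides vanish, the
determinant having two equal columns.
-/

open Finset

lemma phiPow_succ_apply (t : ℕ) (x : ℤ) :
    phiPow (t + 1) x = (phiPow t x + phiPow t (x - 1)) / 2 := by
  show ∑' s, phiPow t s * phiB (x - s) = _
  rw [tsum_eq_sum (s := {x, x - 1}), sum_pair (by omega)]
  · simp only [phiB, deltaK, sub_self, ↓reduceIte, zero_ne_one, add_zero, one_div, sub_sub_cancel,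
      one_ne_zero, zero_add]
    ring
  · intro s hs
    simp only [mem_insert, mem_singleton, not_or] at hs
    simp [phiB, deltaK, show x - s ≠ 0 by omega, show x - s ≠ 1 by omega]

lemma phiPow_eq_zero {t : ℕ} {z : ℤ} (h : z < 0 ∨ (t : ℤ) < z) : phiPow t z = 0 := by
  induction t generalizing z with
  | zero => simp only [phiPow, deltaK, ite_eq_right_iff, one_ne_zero, imp_false]; omega
  | succ t ih => rw [phiPow_succ_apply, ih (by omega), ih (by omega)]; norm_num

lemma summable_phiPow (t : ℕ) : Summable (phiPow t) :=
  summable_of_ne_finset_zero (s := Icc 0 t) fun z hz =>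
    phiPow_eq_zero (by simp only [mem_Icc, not_and_or, not_le] at hz; omega)

lemma Dinv_sub_Dinv_pred {f : ℤ → ℝ} (hf : Summable f) (x : ℤ) :
    Dinv f x - Dinv f (x - 1) = f x := by
  have hDinv (a : ℤ) : Dinv f a = ∑' z, Set.indicator {z | z ≤ a} f z :=
    tsum_subtype {z | z ≤ a} f
  rw [hDinv, hDinv, ← (hf.indicator _).tsum_sub (hf.indicator _), ← tsum_ite_eq x f]
  refine tsum_congr fun z => ?_
  simp only [Set.indicator_apply, Set.mem_ofPred_eq]
  split_ifs <;> first | omega | simp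

namespace Matrix

variable {m n R : Type*} [Fintype m] [Fintype n] [DecidableEq m] [DecidableEq n] [CommRing R]

lemma det_fromBlocks_mul_mul_add_one (A : Matrix m m R) (B : Matrix m n R) (F : Matrix n m R) :
    (fromBlocks A B (F * A) (F * B + 1)).det = A.det := by
  have h : fromBlocks A B (F * A) (F * B + 1) = fromBlocks 1 0 F 1 * fromBlocks A B 0 1 := by
    simp [fromBlocks_multiply]
  rw [h, det_mul, det_fromBlocks_zero₁₂, det_fromBlocks_zero₂₁]
  simp

lemma det_of_apply_eq_zero_of_not_injective {ι : Type*} (f : n → ι → R) {z : n → ι}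
    (hz : ¬ Function.Injective z) :
    (of fun i j => f i (z j)).det = 0 := by
  obtain ⟨j, k, hjk, hne⟩ := Function.not_injective_iff.1 hz
  exact det_zero_of_column_eq hne fun i => by simp [hjk]

end Matrix

def succDiffMatrix (n : ℕ) (R : Type*) [Ring R] : Matrix (Fin n) (Fin (n + 1)) R :=
  Matrix.of fun i => Pi.single i.castSucc 1 - Pi.single i.succ 1

lemma succDiffMatrix_mul_apply {n : ℕ} {R α : Type*} [Ring R] (C : Matrix (Fin (n + 1)) α R)
    (i : Fin n) (j : α) : (succDiffMatrix n R * C) i j = C i.castSucc j - C i.succ j := by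
  simp [succDiffMatrix, mul_apply, sub_mul, sum_sub_distrib, Pi.single_apply]

lemma qker_packed (n t : ℕ) (x : Fin (n + 1) → ℤ) (y : Fin n → ℤ) :
    qker n t (fun i => (i : ℤ) + 1) (fun i => (i : ℤ) + 1) x y
      = (of fun i j : Fin (n + 1) => phiPow t (x j - ((i : ℤ) + 1))).det := by
  set A : Matrix (Fin (n + 1)) (Fin (n + 1)) ℝ := of fun i j => phiPow t (x j - ((i : ℤ) + 1))
  set B : Matrix (Fin (n + 1)) (Fin n) ℝ := of fun i j =>
    Dinv (phiPow t) (y j - ((i : ℤ) + 1)) - if (i : ℕ) ≤ (j : ℕ) then 1 else 0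
  have hC : (of fun (i : Fin n) (j : Fin (n + 1)) => Dd (phiPow t) (x j - ((i : ℤ) + 1)))
      = succDiffMatrix n ℝ * A := by
    ext i j
    rw [succDiffMatrix_mul_apply]
    simp only [Dd, of_apply, Fin.val_castSucc, Fin.val_succ, Nat.cast_add, Nat.cast_one,
      sub_right_inj, A]
    ring_nf
  have hD : (of fun i j : Fin n => phiPow t (y j - ((i : ℤ) + 1)))
      = succDiffMatrix n ℝ * B + 1 := by
    ext i j
    have hDinv := Dinv_sub_Dinv_pred (summable_phiPow t) (y j - ((i : ℤ) + 1))
    rw [Matrix.add_apply, succDiffMatrix_mul_apply, one_apply]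
    simp only [B, of_apply, Fin.val_castSucc, Fin.val_succ, Fin.ext_iff]
    push_cast
    rw [show y j - ((i : ℤ) + 1 + 1) = y j - ((i : ℤ) + 1) - 1 by ring]
    split_ifs <;> first | omega | linarith
  rw [qker, hC, hD, det_fromBlocks_mul_mul_add_one]

lemma vand_eq_det_vandermonde {n : ℕ} (z : Fin n → ℤ) :
    vand n z = (vandermonde fun i => (z i : ℝ)).det := by
  simp [vand, det_vandermonde]

lemma vand_packed (n : ℕ) :
    vand (n + 1) (fun i => (i : ℤ) + 1) = n.superFactorial := by
  rw [vand_eq_det_vandermonde]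
  push_cast
  rw [det_vandermonde_add, det_vandermonde_id_eq_superFactorial]

lemma vand_packed_succ (n : ℕ) :
    vand (n + 1) (fun i => (i : ℤ) + 1) = n.factorial * vand n (fun i => (i : ℤ) + 1) := by
  cases n with
  | zero => simp [vand]
  | succ n => rw [vand_packed, vand_packed, Nat.superFactorial_succ]; push_cast; rfl

lemma vand_ne_zero_iff {n : ℕ} {z : Fin n → ℤ} : vand n z ≠ 0 ↔ Function.Injective z := by
  rw [vand_eq_det_vandermonde, det_vandermonde_ne_zero_iff]
  exact Int.cast_injective.of_comp_iff z

theorem qkerPlus_packed_factorizes_general (n t : ℕ) (x : Fin (n+1) → ℤ) (y : Fin n → ℤ) :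
    (vand n y / vand n (fun i : Fin n => (i : ℤ) + 1)) *
        qker n t (fun i => (i : ℤ) + 1) (fun i => (i : ℤ) + 1) x y
      = pplus (n+1) t (fun i : Fin (n+1) => (i : ℤ) + 1) x * lam n x y := by
  rw [qker_packed, pplus, lam, vand_packed_succ]
  by_cases hx : Function.Injective x
  · have hpacked : vand n (fun i : Fin n => (i : ℤ) + 1) ≠ 0 :=
      vand_ne_zero_iff.2 fun i j h => Fin.ext (by simpa using h)
    have hvx := vand_ne_zero_iff.2 hx
    field_simp
  · rw [det_of_apply_eq_zero_of_not_injective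
        (fun (i : Fin (n + 1)) z => phiPow t (z - (i + 1))) hx,
      not_ne_iff.1 (mt vand_ne_zero_iff.1 hx)]
    simp

/-- from the densely packed initial configuration
`x̄^{n+1} = (1,…,n+1)`, `x̄^n = (1,…,n)` the `h`-transformed kernel factorizes as
`q_t^{n,+}((x̄^{n+1},x̄^n),(x,y)) = p_t^{n+1,+}(x̄^{n+1},x) λ^n(x,y)`. -/
theorem qkerPlus_packed_factorizes (n t : ℕ) (x : Fin (n+1) → ℤ) (y : Fin n → ℤ)
    (hxy : interlace n x y) :
    (vand n y / vand n (fun i : Fin n => (i : ℤ) + 1)) *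
        qker n t (fun i => (i : ℤ) + 1) (fun i => (i : ℤ) + 1) x y
      = pplus (n+1) t (fun i : Fin (n+1) => (i : ℤ) + 1) x * lam n x y :=
  qkerPlus_packed_factorizes_general n t x y
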